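/- arXiv:1602.00281 — 3 statements merged into one kernel-verified Lean document; each statement's English description precedes it below -/
import Mathlib

section
/- Kadison's inequality: if M is a C*-algebra (or von Neumann algebra) with unit and S : M → M is a positive linear map with S(1) ≤ 1, then S(x)² ≤ S(x²) for every self-adjoint x ∈ M. -/
/-!
Let `ρ` be a partition of unity on the spectrum of `x` whose supports have small diameter, centred
at points `tᵢ` of the spectrum, and `aᵢ = ρᵢ(x)`. Then `aᵢ ≥ 0`, `∑ aᵢ = 1`, and `∑ tᵢ aᵢ`,
`∑ tᵢ² aᵢ` approximate `x`, `x²` in norm. Since positive maps are continuous and `≤` is closed,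
it suffices to prove the inequality for these sums, i.e. `(∑ tᵢ bᵢ)² ≤ ∑ tᵢ² bᵢ` for `bᵢ = S aᵢ`,
where `bᵢ ≥ 0` and `∑ bᵢ = S 1 ≤ 1`. With `c = ∑ tᵢ bᵢ` this follows from
`0 ≤ ∑ (tᵢ - c) bᵢ (tᵢ - c) = ∑ tᵢ² bᵢ - 2c² + c (∑ bᵢ) c` and `c (∑ bᵢ) c ≤ c²`.
-/

open Metric

section Jensen

variable {A : Type*} [Ring A] [StarRing A] [PartialOrder A] [StarOrderedRing A] [Algebra ℝ A]
  [StarModule ℝ A]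

theorem sq_sum_smul_le_sum_sq_smul {ι : Type*} [Fintype ι] (t : ι → ℝ) {b : ι → A}
    (hb : ∀ i, 0 ≤ b i) (hsum : ∑ i, b i ≤ 1) :
    (∑ i, t i • b i) ^ 2 ≤ ∑ i, t i ^ 2 • b i := by
  set c := ∑ i, t i • b i with hc_def
  have hc : IsSelfAdjoint c :=
    isSelfAdjoint_sum _ fun i _ => (IsSelfAdjoint.all (t i)).smul (.of_nonneg (hb i))
  have hexpand : ∑ i, (t i • 1 - c) * b i * (t i • 1 - c)
      = ∑ i, t i ^ 2 • b i - c * c - c * c + c * (∑ i, b i) * c := by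
    have hterm (i : ι) : (t i • 1 - c) * b i * (t i • 1 - c)
        = t i ^ 2 • b i - t i • b i * c - c * (t i • b i) + c * b i * c := by
      simp only [sub_mul, mul_sub, smul_mul_assoc, mul_smul_comm, one_mul, mul_one, sq]
      module
    simp only [hterm, Finset.sum_add_distrib, Finset.sum_sub_distrib, ← Finset.sum_mul,
      ← Finset.mul_sum, ← hc_def]
  have hsquares : 0 ≤ ∑ i, (t i • 1 - c) * b i * (t i • 1 - c) :=
    Finset.sum_nonneg fun i _ => by
      simpa [hc.star_eq] using star_left_conjugate_nonneg (hb i) (t i • 1 - c)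
  have hconj : c * (∑ i, b i) * c ≤ c * c := by
    simpa [hc.star_eq] using star_left_conjugate_le_conjugate hsum c
  rw [hexpand] at hsquares
  calc c ^ 2 = c * c := sq c
    _ ≤ c * c + (c * c - c * (∑ i, b i) * c) := le_add_of_nonneg_right (sub_nonneg.2 hconj)
    _ ≤ ∑ i, t i ^ 2 • b i := by
      rw [← sub_nonneg]
      convert hsquares using 1
      module

end Jensen

theorem exists_partitionOfUnity_dist_lt {X : Type*} [MetricSpace X] {K : Set X}
    (hK : IsCompact K) {δ : ℝ} (hδ : 0 < δ) :
    ∃ (c : Finset X) (ρ : PartitionOfUnity c X K),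
      (∀ i : c, (i : X) ∈ K) ∧ ∀ (i : c) (y : X), ρ i y ≠ 0 → dist y i < δ := by
  obtain ⟨c, hcK, hcover⟩ := hK.elim_nhds_subcover (fun x => ball x δ)
    fun x _ => ball_mem_nhds x hδ
  obtain ⟨ρ, hρ⟩ := PartitionOfUnity.exists_isSubordinate hK.isClosed
    (fun i : c => ball (i : X) δ) (fun _ => isOpen_ball)
    (by simpa [Set.iUnion_subtype] using hcover)
  exact ⟨c, ρ, fun i => hcK i i.2, fun i y hy => hρ i (subset_tsupport _ hy)⟩

section CFC

variable {A : Type*} [CStarAlgebra A]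

theorem IsSelfAdjoint.sum_cfc_partitionOfUnity_eq_one {x : A} (hx : IsSelfAdjoint x) {ι : Type*}
    [Fintype ι] (ρ : PartitionOfUnity ι ℝ (spectrum ℝ x)) : ∑ i, cfc (ρ i) x = 1 := by
  rw [← cfc_sum (fun i => ⇑(ρ i)) x Finset.univ, ← cfc_one ℝ x]
  refine cfc_congr fun t ht => ?_
  simpa [finsum_eq_sum_of_fintype] using ρ.sum_eq_one ht

theorem norm_cfc_sub_sum_smul_cfc_partitionOfUnity_le {x : A} {ι : Type*} [Fintype ι]
    (ρ : PartitionOfUnity ι ℝ (spectrum ℝ x))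
    {h : ℝ → ℝ} (hh : ContinuousOn h (spectrum ℝ x)) (y : ι → ℝ) {ε : ℝ} (hε : 0 ≤ ε)
    (hy : ∀ i, ∀ t ∈ spectrum ℝ x, ρ i t ≠ 0 → |h t - y i| ≤ ε) :
    ‖cfc h x - ∑ i, y i • cfc (ρ i) x‖ ≤ ε := by
  have hsum : ∑ i, y i • cfc (ρ i) x = cfc (∑ i, y i • ⇑(ρ i)) x := by
    rw [cfc_sum_univ _ _ fun i => ((ρ i).continuous.const_smul (y i)).continuousOn]
    exact Finset.sum_congr rfl fun i _ => (cfc_smul (y i) (ρ i) x).symm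
  have hcont : Continuous (∑ i, y i • ⇑(ρ i)) := by
    convert continuous_finsetSum Finset.univ fun i _ => (ρ i).continuous.const_smul (y i)
    simp
  rw [hsum, ← cfc_sub h _ x hh hcont.continuousOn]
  refine norm_cfc_le hε fun t ht => ?_
  have := ρ.finsum_smul_mem_convex (g := fun i _ => y i) ht
    (fun i hi => mem_closedBall.2 ((abs_sub_comm _ _).trans_le (hy i t ht hi)))
    (convex_closedBall (h t) ε)
  simpa [finsum_eq_sum_of_fintype, dist_eq_norm, norm_sub_rev, mul_comm] using this

theorem IsSelfAdjoint.exists_partitionOfUnity_approx {x : A} (hx : IsSelfAdjoint x) {ε : ℝ}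
    (hε : 0 < ε) :
    ∃ (c : Finset ℝ) (ρ : PartitionOfUnity c ℝ (spectrum ℝ x)),
      ‖x - ∑ i : c, (i : ℝ) • cfc (ρ i) x‖ ≤ ε ∧
        ‖x ^ 2 - ∑ i : c, (i : ℝ) ^ 2 • cfc (ρ i) x‖ ≤ ε := by
  have hK : IsCompact (spectrum ℝ x) := ContinuousFunctionalCalculus.isCompact_spectrum x
  obtain ⟨δ, hδ, hsq⟩ := uniformContinuousOn_iff_le.1
    (hK.uniformContinuousOn_of_continuous (continuous_pow 2).continuousOn) ε hε
  obtain ⟨c, ρ, hcK, hρ⟩ := exists_partitionOfUnity_dist_lt hK (lt_min hε hδ)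
  refine ⟨c, ρ, ?_, ?_⟩
  · have := norm_cfc_sub_sum_smul_cfc_partitionOfUnity_le ρ (continuousOn_id' _) _ hε.le
      fun i t _ hi => (hρ i t hi).le.trans (min_le_left _ _)
    rwa [cfc_id' ℝ x] at this
  · have := norm_cfc_sub_sum_smul_cfc_partitionOfUnity_le ρ (continuous_pow 2).continuousOn
      (fun i => (i : ℝ) ^ 2) hε.le
      fun i t ht hi => hsq t ht i (hcK i) ((hρ i t hi).le.trans (min_le_right _ _))
    rwa [cfc_pow_id x 2] at this

end CFC

theorem kadison_inequality {M : Type*} [NormedRing M] [StarRing M] [CStarRing M]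
    [PartialOrder M] [StarOrderedRing M] [CompleteSpace M] [NormedAlgebra ℂ M]
    [StarModule ℂ M]
    (S : M →ₗ[ℂ] M)
    (hpos : ∀ a : M, 0 ≤ a → 0 ≤ S a)
    (h1 : S 1 ≤ 1) :
    ∀ x : M, IsSelfAdjoint x → (S x) ^ 2 ≤ S (x ^ 2) := by
  let _ : CStarAlgebra M :=
    { ‹NormedRing M›, ‹StarRing M›, ‹CompleteSpace M›, ‹CStarRing M›,
      ‹NormedAlgebra ℂ M›, ‹StarModule ℂ M› with }
  intro x hx
  have hS : Continuous S := map_continuous (PositiveLinearMap.mk₀ S hpos)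
  have hclosed : IsClosed {p : M × M | S p.1 ^ 2 ≤ S p.2} :=
    isClosed_le (by fun_prop) (by fun_prop)
  refine hclosed.closure_subset (a := (x, x ^ 2)) (Metric.mem_closure_iff.2 fun ε hε => ?_)
  obtain ⟨c, ρ, hu, hv⟩ := hx.exists_partitionOfUnity_approx (half_pos hε)
  refine ⟨(∑ i : c, (i : ℝ) • cfc (ρ i) x, ∑ i : c, (i : ℝ) ^ 2 • cfc (ρ i) x), ?_, ?_⟩
  · simp only [Set.mem_ofPred_eq, map_sum, S.map_smul_of_tower]
    refine sq_sum_smul_le_sum_sq_smul _ (fun i => hpos _ (cfc_nonneg fun t _ => ρ.nonneg i t)) ?_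
    rw [← map_sum, hx.sum_cfc_partitionOfUnity_eq_one ρ]
    exact h1
  · rw [Prod.dist_eq, dist_eq_norm, dist_eq_norm]
    exact max_lt (hu.trans_lt (half_lt_self hε)) (hv.trans_lt (half_lt_self hε))
end

section
/- Let (X, ‖·‖) be a Banach space, let (L⁰, topology of convergence in measure) be the space of measurable functions (or τ-measurable operators), and let A_n : X → L⁰ be a sequence of additive maps that is uniformly equicontinuous in measure at zero on X. Then the set C = { x ∈ X : (A_n(x)) converges almost uniformly } is closed in X. -/
/-!
Whether `A n x` converges almost uniformly depends only on the almost uniform Cauchy condition,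
since `L⁰` is complete for almost uniform convergence (intersect countably many large sets on
which the Cauchy estimates hold with `δ = 1/(j+1)`). The Cauchy condition passes to limits: if
`‖x - y‖ < γ` and `y` satisfies it, then outside a small set `A n (x - y)` is uniformly small by
equicontinuity, and `A n x = A n (x - y) + A n y` by additivity.
-/

open MeasureTheory Filter
open scoped ENNReal NNReal

namespace MeasureTheory

variable {Ω : Type*} [MeasurableSpace Ω] (μ : Measure Ω)

def TendstoAlmostUniformly {β : Type*} [UniformSpace β] (f : ℕ → Ω → β) (g : Ω → β) : Prop :=
  ∀ ε > (0:ℝ), ∃ E : Set Ω, MeasurableSet E ∧ μ Eᶜ ≤ ENNReal.ofReal ε ∧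
    TendstoUniformlyOn f g atTop E

def AlmostUniformCauchy {β : Type*} [PseudoMetricSpace β] (f : ℕ → Ω → β) : Prop :=
  ∀ ε > (0:ℝ), ∀ δ > (0:ℝ), ∃ E : Set Ω, MeasurableSet E ∧ μ Eᶜ ≤ ENNReal.ofReal ε ∧
    ∃ N, ∀ m ≥ N, ∀ n ≥ N, ∀ ω ∈ E, dist (f m ω) (f n ω) < δ

variable {μ}

theorem measure_compl_inter_le_ofReal_add {E F : Set Ω} {a b : ℝ} (ha : 0 ≤ a) (hb : 0 ≤ b)
    (hE : μ Eᶜ ≤ ENNReal.ofReal a) (hF : μ Fᶜ ≤ ENNReal.ofReal b) :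
    μ (E ∩ F)ᶜ ≤ ENNReal.ofReal (a + b) :=
  calc μ (E ∩ F)ᶜ = μ (Eᶜ ∪ Fᶜ) := by rw [Set.compl_inter]
    _ ≤ μ Eᶜ + μ Fᶜ := measure_union_le _ _
    _ ≤ ENNReal.ofReal a + ENNReal.ofReal b := add_le_add hE hF
    _ = ENNReal.ofReal (a + b) := (ENNReal.ofReal_add ha hb).symm

theorem exists_measurableSet_forall_of_antitone {ι : Type*} [Countable ι]
    {P : ι → Set Ω → Prop}
    (hP : ∀ i, ∀ ε > (0:ℝ), ∃ E, MeasurableSet E ∧ μ Eᶜ ≤ ENNReal.ofReal ε ∧ P i E)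
    (hanti : ∀ i ⦃E F : Set Ω⦄, F ⊆ E → P i E → P i F) {ε : ℝ} (hε : 0 < ε) :
    ∃ E, MeasurableSet E ∧ μ Eᶜ ≤ ENNReal.ofReal ε ∧ ∀ i, P i E := by
  obtain ⟨ε', hε'pos, hε'sum⟩ :=
    ENNReal.exists_pos_sum_of_countable (ENNReal.ofReal_pos.mpr hε).ne' ι
  choose E hEmeas hEμ hPE using fun i => hP i (ε' i) (hε'pos i)
  refine ⟨⋂ i, E i, .iInter hEmeas, ?_, fun i => hanti i (Set.iInter_subset E i) (hPE i)⟩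
  calc μ (⋂ i, E i)ᶜ = μ (⋃ i, (E i)ᶜ) := by rw [Set.compl_iInter]
    _ ≤ ∑' i, μ (E i)ᶜ := measure_iUnion_le _
    _ ≤ ∑' i, (ε' i : ℝ≥0∞) :=
      ENNReal.tsum_le_tsum fun i => by simpa only [ENNReal.ofReal_coe_nnreal] using hEμ i
    _ ≤ ENNReal.ofReal ε := hε'sum.le

section Complete

variable {β : Type*} [PseudoMetricSpace β] {f : ℕ → Ω → β}

theorem TendstoAlmostUniformly.almostUniformCauchy {g : Ω → β}
    (hf : TendstoAlmostUniformly μ f g) : AlmostUniformCauchy μ f := by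
  intro ε hε δ hδ
  obtain ⟨E, hEmeas, hEμ, hfE⟩ := hf ε hε
  exact ⟨E, hEmeas, hEμ, Metric.uniformCauchySeqOn_iff.mp hfE.uniformCauchySeqOn δ hδ⟩

theorem AlmostUniformCauchy.exists_uniformCauchySeqOn (hf : AlmostUniformCauchy μ f)
    {ε : ℝ} (hε : 0 < ε) :
    ∃ E, MeasurableSet E ∧ μ Eᶜ ≤ ENNReal.ofReal ε ∧ UniformCauchySeqOn f atTop E := by
  obtain ⟨E, hEmeas, hEμ, hCauchy⟩ :=
    exists_measurableSet_forall_of_antitone (μ := μ)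
      (P := fun (j : ℕ) E => ∃ N, ∀ m ≥ N, ∀ n ≥ N, ∀ ω ∈ E, dist (f m ω) (f n ω) < 1 / (j + 1))
      (fun j ε hε => hf ε hε _ Nat.one_div_pos_of_nat)
      (fun j E F hFE ⟨N, hN⟩ => ⟨N, fun m hm n hn ω hω => hN m hm n hn ω (hFE hω)⟩) hε
  refine ⟨E, hEmeas, hEμ, Metric.uniformCauchySeqOn_iff.mpr fun δ hδ => ?_⟩
  obtain ⟨j, hj⟩ := exists_nat_one_div_lt hδ
  obtain ⟨N, hN⟩ := hCauchy j
  exact ⟨N, fun m hm n hn ω hω => (hN m hm n hn ω hω).trans hj⟩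

theorem AlmostUniformCauchy.tendstoAlmostUniformly_limUnder [CompleteSpace β] [Nonempty β]
    (hf : AlmostUniformCauchy μ f) :
    TendstoAlmostUniformly μ f fun ω => limUnder atTop fun n => f n ω := by
  intro ε hε
  obtain ⟨E, hEmeas, hEμ, hfE⟩ := hf.exists_uniformCauchySeqOn hε
  exact ⟨E, hEmeas, hEμ,
    hfE.tendstoUniformlyOn_of_tendsto fun ω hω => (hfE.cauchySeq hω).tendsto_limUnder⟩

theorem exists_tendstoAlmostUniformly_iff [CompleteSpace β] [Nonempty β] :
    (∃ g, TendstoAlmostUniformly μ f g) ↔ AlmostUniformCauchy μ f :=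
  ⟨fun ⟨_, hg⟩ => hg.almostUniformCauchy, fun hf => ⟨_, hf.tendstoAlmostUniformly_limUnder⟩⟩

end Complete

variable {X E : Type*} [SeminormedAddCommGroup X] [SeminormedAddCommGroup E]

def UniformlyEquicontinuousInMeasureAtZero (μ : Measure Ω) (A : ℕ → X → Ω → E) : Prop :=
  ∀ ε > (0:ℝ), ∀ δ > (0:ℝ), ∃ γ > (0:ℝ), ∀ x : X, ‖x‖ < γ →
    ∃ F : Set Ω, MeasurableSet F ∧ μ Fᶜ ≤ ENNReal.ofReal ε ∧ ∀ n, ∀ ω ∈ F, ‖A n x ω‖ ≤ δ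

theorem isClosed_setOf_almostUniformCauchy {A : ℕ → X → Ω → E}
    (hadd : ∀ n x y, A n (x + y) = A n x + A n y)
    (huem : UniformlyEquicontinuousInMeasureAtZero μ A) :
    IsClosed {x | AlmostUniformCauchy μ fun n => A n x} := by
  refine isClosed_of_closure_subset fun x hx ε hε δ hδ => ?_
  obtain ⟨γ, hγ, hsmall⟩ := huem (ε / 2) (by linarith) (δ / 3) (by linarith)
  obtain ⟨y, hy, hxy⟩ := Metric.mem_closure_iff.mp hx γ hγ
  obtain ⟨F, hFmeas, hFμ, hAsmall⟩ := hsmall (x - y) (by rwa [dist_eq_norm_sub] at hxy)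
  obtain ⟨G, hGmeas, hGμ, N, hN⟩ := hy (ε / 2) (by linarith) (δ / 3) (by linarith)
  refine ⟨F ∩ G, hFmeas.inter hGmeas, ?_, N, fun m hm n hn ω hω => ?_⟩
  · simpa only [add_halves] using
      measure_compl_inter_le_ofReal_add (by linarith) (by linarith) hFμ hGμ
  have hsplit : ∀ k, A k x ω = A k (x - y) ω + A k y ω := fun k => by
    rw [← Pi.add_apply, ← hadd, sub_add_cancel]
  calc dist (A m x ω) (A n x ω)
      = dist (A m (x - y) ω + A m y ω) (A n (x - y) ω + A n y ω) := by rw [hsplit, hsplit]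
    _ ≤ dist (A m (x - y) ω) (A n (x - y) ω) + dist (A m y ω) (A n y ω) := dist_add_add_le _ _ _ _
    _ ≤ ‖A m (x - y) ω‖ + ‖A n (x - y) ω‖ + dist (A m y ω) (A n y ω) := by
      gcongr; exact dist_le_norm_add_norm _ _
    _ < δ / 3 + δ / 3 + δ / 3 :=
      add_lt_add_of_le_of_lt (add_le_add (hAsmall m ω hω.1) (hAsmall n ω hω.1))
        (hN m hm n hn ω hω.2)
    _ = δ := by ring

end MeasureTheory

theorem uem_closed_convergence_set_general {X : Type*} [NormedAddCommGroup X]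
    {Ω : Type*} [MeasurableSpace Ω] (μ : Measure Ω)
    (A : ℕ → X → Ω → ℝ)
    (hadd : ∀ n : ℕ, ∀ x y : X, A n (x + y) = A n x + A n y)
    (huem : ∀ ε > (0:ℝ), ∀ δ > (0:ℝ), ∃ γ > (0:ℝ), ∀ x : X, ‖x‖ < γ →
      ∃ E : Set Ω, MeasurableSet E ∧ μ Eᶜ ≤ ENNReal.ofReal ε ∧
        ∀ n : ℕ, ∀ ω ∈ E, |A n x ω| ≤ δ) :
    IsClosed {x : X | ∃ g : Ω → ℝ, ∀ ε > (0:ℝ),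
      ∃ E : Set Ω, MeasurableSet E ∧ μ Eᶜ ≤ ENNReal.ofReal ε ∧
        TendstoUniformlyOn (fun n => A n x) g atTop E} := by
  convert isClosed_setOf_almostUniformCauchy hadd huem using 2
  exact funext fun _ => propext exists_tendstoAlmostUniformly_iff

theorem uem_closed_convergence_set {X : Type*} [NormedAddCommGroup X] [CompleteSpace X]
    {Ω : Type*} [MeasurableSpace Ω] (μ : Measure Ω)
    (A : ℕ → X → Ω → ℝ)
    (hadd : ∀ n : ℕ, ∀ x y : X, A n (x + y) = A n x + A n y)
    (huem : ∀ ε > (0:ℝ), ∀ δ > (0:ℝ), ∃ γ > (0:ℝ), ∀ x : X, ‖x‖ < γ →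
      ∃ E : Set Ω, MeasurableSet E ∧ μ Eᶜ ≤ ENNReal.ofReal ε ∧
        ∀ n : ℕ, ∀ ω ∈ E, |A n x ω| ≤ δ) :
    IsClosed {x : X | ∃ g : Ω → ℝ, ∀ ε > (0:ℝ),
      ∃ E : Set Ω, MeasurableSet E ∧ μ Eᶜ ≤ ENNReal.ofReal ε ∧
        TendstoUniformlyOn (fun n => A n x) g atTop E} :=
  uem_closed_convergence_set_general μ A hadd huem
end

section
/- Let T be a positive Dunford–Schwartz operator on a σ-finite measure space (positive linear, ‖Tf‖₁ ≤ ‖f‖₁ and ‖Tf‖_∞ ≤ ‖f‖_∞), and let Φ be an Orlicz function. Then the ergodic averages A_n(f) = (1/n)∑_{k=0}^{n-1} T^k f, viewed as maps from the Orlicz space L^Φ (with Luxemburg norm) into L⁰, are uniformly equicontinuous in measure at zero: for every ε > 0 and δ > 0 there is γ > 0 such that whenever ‖f‖_Φ ≤ γ there is a measurable set E with μ(Eᶜ) ≤ ε and sup_n ‖χ_E A_n(|f|) χ_E‖_∞ ≤ δ. -/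
/-!
Write `d = δ / 2` and split `|f| ≤ min |f| d + (d / Φ d) Φ(|f|)` (convexity and `Φ 0 = 0`).
The averages of the bounded part stay below `d` almost everywhere by the `L^∞`-contraction.
If `‖f‖_Φ < b ≤ 1` then `∫ Φ(|f|) ≤ b`, so the averages of `Φ(|f|)` exceed `Φ d` only on a set
of measure at most `b / Φ d` by the weak-type `(1,1)` maximal inequality. That inequality comes
from Hopf's maximal ergodic lemma applied to `g - ν 1_F` on the finite-measure pieces `F` of the
σ-finite space.
-/

open MeasureTheory Finset

/-- The Luxemburg norm of `f` with respect to the Orlicz function `Φ`. -/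
noncomputable def luxemburgNorm {α : Type*} [MeasurableSpace α] (μ : Measure α)
    (Φ : ℝ → ℝ) (f : α → ℝ) : ℝ :=
  sInf {a : ℝ | 0 < a ∧ ∫⁻ x, ENNReal.ofReal (Φ (|f x| / a)) ∂μ ≤ 1}

open scoped ENNReal

section ErgodicSum

variable {R M : Type*} [Semiring R] [AddCommGroup M] [Module R M] (T : Module.End R M)

def ergodicSum (n : ℕ) : Module.End R M := ∑ k ∈ range n, T ^ k

@[simp] lemma ergodicSum_zero : ergodicSum T 0 = 0 := sum_range_zero _

lemma ergodicSum_succ (n : ℕ) : ergodicSum T (n + 1) = T * ergodicSum T n + 1 := geom_sum_succ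

lemma ergodicSum_apply (n : ℕ) (f : M) : ergodicSum T n f = ∑ k ∈ range n, T^[k] f := by
  simp only [ergodicSum, LinearMap.sum_apply, Module.End.pow_apply]

variable {T} [PartialOrder M] [IsOrderedAddMonoid M]

lemma monotone_ergodicSum (hT : Monotone T) (n : ℕ) : Monotone (ergodicSum T n) :=
  (monotone_iff_map_nonneg _).2 fun f hf => by
    rw [ergodicSum_apply]
    exact sum_nonneg fun k _ => by simpa using hT.iterate k hf

end ErgodicSum

section Contraction

variable {α : Type*} [MeasurableSpace α] {μ : Measure α}

def IsL1Contraction (μ : Measure α) (T : (α → ℝ) → α → ℝ) : Prop :=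
  ∀ f, Integrable f μ → Integrable (T f) μ ∧ ∫ x, |T f x| ∂μ ≤ ∫ x, |f x| ∂μ

def IsLInftyContraction (μ : Measure α) (T : (α → ℝ) → α → ℝ) : Prop :=
  ∀ f, eLpNorm (T f) ⊤ μ ≤ eLpNorm f ⊤ μ

namespace IsL1Contraction

variable {T : (α → ℝ) → α → ℝ} {f : α → ℝ}

lemma integrable_iterate (hT : IsL1Contraction μ T) (hf : Integrable f μ) (k : ℕ) :
    Integrable (T^[k] f) μ := by
  induction k generalizing f with
  | zero => exact hf
  | succ k ih => exact ih (hT f hf).1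

lemma integral_le_integral_abs (hT : IsL1Contraction μ T) (hf : Integrable f μ) :
    ∫ x, T f x ∂μ ≤ ∫ x, |f x| ∂μ :=
  (integral_mono (hT f hf).1 (hT f hf).1.abs fun _ => le_abs_self _).trans (hT f hf).2

end IsL1Contraction

lemma IsL1Contraction.integrable_ergodicSum {T : Module.End ℝ (α → ℝ)}
    (hT : IsL1Contraction μ T) {f : α → ℝ} (hf : Integrable f μ) (n : ℕ) :
    Integrable (ergodicSum T n f) μ := by
  rw [ergodicSum_apply]
  exact integrable_finsetSum' _ fun k _ => hT.integrable_iterate hf k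

namespace IsLInftyContraction

lemma eLpNorm_iterate_le {T : (α → ℝ) → α → ℝ} (hT : IsLInftyContraction μ T) (f : α → ℝ)
    (k : ℕ) : eLpNorm (T^[k] f) ⊤ μ ≤ eLpNorm f ⊤ μ := by
  induction k generalizing f with
  | zero => rfl
  | succ k ih => exact (ih (T f)).trans (hT f)

lemma ae_iterate_le {T : (α → ℝ) → α → ℝ} (hT : IsLInftyContraction μ T) {f : α → ℝ} {C : ℝ}
    (hf : ∀ x, |f x| ≤ C) : ∀ᵐ x ∂μ, ∀ k, T^[k] f x ≤ C := by
  refine ae_all_iff.2 fun k => ?_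
  have hnorm : eLpNormEssSup (T^[k] f) μ ≤ ENNReal.ofReal C :=
    (hT.eLpNorm_iterate_le f k).trans
      (eLpNormEssSup_le_of_ae_bound (Filter.Eventually.of_forall fun x => (hf x : ‖f x‖ ≤ C)))
  filter_upwards [ae_le_eLpNormEssSup (μ := μ) (f := T^[k] f)] with x hx
  have hC : 0 ≤ C := (abs_nonneg _).trans (hf x)
  rw [← ofReal_norm] at hx
  exact (le_abs_self _).trans ((ENNReal.ofReal_le_ofReal_iff hC).1 (hx.trans hnorm))

lemma ae_ergodicSum_le {T : Module.End ℝ (α → ℝ)} (hT : IsLInftyContraction μ T) {f : α → ℝ}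
    {C : ℝ} (hf : ∀ x, |f x| ≤ C) : ∀ᵐ x ∂μ, ∀ n, ergodicSum T n f x ≤ n * C := by
  filter_upwards [hT.ae_iterate_le hf] with x hx n
  rw [ergodicSum_apply, Finset.sum_apply]
  calc ∑ k ∈ range n, T^[k] f x ≤ ∑ _k ∈ range n, C := sum_le_sum fun k _ => hx k
    _ = n * C := by simp

end IsLInftyContraction

end Contraction

section Hopf

variable {α : Type*} {T : Module.End ℝ (α → ℝ)} {w : α → ℝ} {N : ℕ}

def maxErgodicSum (T : Module.End ℝ (α → ℝ)) (w : α → ℝ) (N : ℕ) : α → ℝ :=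
  (range (N + 1)).sup' nonempty_range_add_one fun n => ergodicSum T n w

lemma ergodicSum_le_maxErgodicSum {n : ℕ} (hn : n ≤ N) :
    ergodicSum T n w ≤ maxErgodicSum T w N :=
  le_sup' (fun n => ergodicSum T n w) (mem_range_succ_iff.2 hn)

lemma maxErgodicSum_nonneg : 0 ≤ maxErgodicSum T w N := by
  simpa using ergodicSum_le_maxErgodicSum (T := T) (w := w) (N.zero_le)

lemma maxErgodicSum_le_add (hT : Monotone T) {x : α} (hx : 0 < maxErgodicSum T w N x) :
    maxErgodicSum T w N x ≤ w x + T (maxErgodicSum T w N) x := by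
  obtain ⟨n, hn, hmax⟩ := exists_mem_eq_sup' nonempty_range_add_one fun n => ergodicSum T n w x
  have hmax' : maxErgodicSum T w N x = ergodicSum T n w x := by
    rw [maxErgodicSum, Finset.sup'_apply, hmax]
  rw [hmax'] at hx ⊢
  cases n with
  | zero => simp at hx
  | succ m =>
    rw [ergodicSum_succ, LinearMap.add_apply, Module.End.mul_apply, Module.End.one_apply,
      add_comm, Pi.add_apply]
    have hm : m ≤ N := by have := mem_range.1 hn; omega
    exact add_le_add_right (hT (ergodicSum_le_maxErgodicSum hm) x) _

lemma maxErgodicSum_sub_le_indicator (hT : Monotone T) :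
    maxErgodicSum T w N - T (maxErgodicSum T w N) ≤
      {x | 0 < maxErgodicSum T w N x}.indicator w := by
  intro x
  by_cases hx : 0 < maxErgodicSum T w N x
  · rw [Pi.sub_apply, Set.indicator_of_mem (s := {x | 0 < maxErgodicSum T w N x}) hx]
    linarith [maxErgodicSum_le_add hT hx]
  · have hM : maxErgodicSum T w N x = 0 := le_antisymm (not_lt.1 hx) (maxErgodicSum_nonneg x)
    have hTM : 0 ≤ T (maxErgodicSum T w N) x :=
      (monotone_iff_map_nonneg T).1 hT _ maxErgodicSum_nonneg x
    rw [Pi.sub_apply, Set.indicator_of_notMem (s := {x | 0 < maxErgodicSum T w N x}) hx, hM]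
    linarith

variable [MeasurableSpace α] {μ : Measure α}

lemma IsL1Contraction.integrable_maxErgodicSum (hT : IsL1Contraction μ T)
    (hw : Integrable w μ) : Integrable (maxErgodicSum T w N) μ :=
  sup'_induction (p := (Integrable · μ)) _ _ (fun _ h₁ _ h₂ => h₁.sup h₂)
    fun n _ => hT.integrable_ergodicSum hw n

theorem setIntegral_maxErgodicSum_pos_nonneg (hT : Monotone T) (hT1 : IsL1Contraction μ T)
    (hw : Integrable w μ) : 0 ≤ ∫ x in {x | 0 < maxErgodicSum T w N x}, w x ∂μ := by
  set M := maxErgodicSum T w N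
  have hM : Integrable M μ := hT1.integrable_maxErgodicSum hw
  have hTM : Integrable (T M) μ := (hT1 M hM).1
  have hpos : NullMeasurableSet {x | 0 < M x} μ :=
    nullMeasurableSet_lt aemeasurable_const hM.aemeasurable
  have hTM_le : ∫ x, T M x ∂μ ≤ ∫ x, M x ∂μ := by
    have habs : ∀ x, |M x| = M x := fun x => abs_of_nonneg (maxErgodicSum_nonneg x)
    simpa only [habs] using hT1.integral_le_integral_abs hM
  rw [← integral_indicator₀ hpos]
  calc 0 ≤ ∫ x, M x ∂μ - ∫ x, T M x ∂μ := sub_nonneg.2 hTM_le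
    _ = ∫ x, (M - T M) x ∂μ := (integral_sub hM hTM).symm
    _ ≤ _ := integral_mono (hM.sub hTM) (hw.indicator₀ hpos) (maxErgodicSum_sub_le_indicator hT)

end Hopf

section MaximalInequality

variable {α : Type*} [MeasurableSpace α] {μ : Measure α} {T : Module.End ℝ (α → ℝ)}
  {g : α → ℝ} {ν : ℝ}

theorem measure_exists_ergodicSum_gt_inter_le (hT : Monotone T) (hT1 : IsL1Contraction μ T)
    (hTinf : IsLInftyContraction μ T) (hg : Integrable g μ) (hg0 : 0 ≤ g) (hν : 0 < ν)
    {F : Set α} (hF : MeasurableSet F) (hFμ : μ F ≠ ∞) (N : ℕ) :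
    μ ({x | ∃ n ≤ N, ν * n < ergodicSum T n g x} ∩ F) ≤
      ENNReal.ofReal ((∫ x, g x ∂μ) / ν) := by
  set χ : α → ℝ := F.indicator fun _ => ν
  have hχ : Integrable χ μ := (integrable_indicator_iff hF).2 (integrableOn_const hFμ)
  have hχν : ∀ x, |χ x| ≤ ν := fun x => by
    by_cases hx : x ∈ F <;> simp [χ, hx, abs_of_pos hν, hν.le]
  set M := maxErgodicSum T (g - χ) N
  set P := {x | 0 < M x} ∩ F
  have hPμ : μ P ≠ ∞ := ((measure_mono Set.inter_subset_right).trans_lt hFμ.lt_top).ne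
  -- a.e. `ergodicSum T n χ ≤ n ν`, so where `ergodicSum T n g > n ν` we get `M > 0`
  have hsub : ({x | ∃ n ≤ N, ν * n < ergodicSum T n g x} ∩ F : Set α) ≤ᵐ[μ] P := by
    filter_upwards [hTinf.ae_ergodicSum_le hχν] with x hχx ⟨⟨n, hn, hgt⟩, hxF⟩
    refine ⟨lt_of_lt_of_le ?_ (ergodicSum_le_maxErgodicSum hn x), hxF⟩
    rw [map_sub, Pi.sub_apply, sub_pos]
    linarith [hχx n]
  have hhopf : 0 ≤ ∫ x in {x | 0 < M x}, (g x - χ x) ∂μ :=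
    setIntegral_maxErgodicSum_pos_nonneg hT hT1 (hg.sub hχ)
  have hχint : ∫ x in {x | 0 < M x}, χ x ∂μ = μ.real P * ν := by
    rw [setIntegral_indicator hF, setIntegral_const, smul_eq_mul]
  have hgint : ∫ x in {x | 0 < M x}, g x ∂μ ≤ ∫ x, g x ∂μ :=
    setIntegral_le_integral hg (ae_of_all _ hg0)
  rw [integral_sub hg.integrableOn hχ.integrableOn, hχint] at hhopf
  calc μ ({x | ∃ n ≤ N, ν * n < ergodicSum T n g x} ∩ F) ≤ μ P := measure_mono_ae hsub
    _ = ENNReal.ofReal (μ.real P) := (ofReal_measureReal hPμ).symm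
    _ ≤ _ := ENNReal.ofReal_le_ofReal ((le_div_iff₀ hν).2 (by linarith))

theorem measure_exists_ergodicSum_gt_le [SigmaFinite μ] (hT : Monotone T)
    (hT1 : IsL1Contraction μ T) (hTinf : IsLInftyContraction μ T) (hg : Integrable g μ)
    (hg0 : 0 ≤ g) (hν : 0 < ν) :
    μ {x | ∃ n, ν * n < ergodicSum T n g x} ≤ ENNReal.ofReal ((∫ x, g x ∂μ) / ν) := by
  have hunion : {x | ∃ n, ν * n < ergodicSum T n g x} =
      ⋃ N, {x | ∃ n ≤ N, ν * n < ergodicSum T n g x} := by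
    ext x
    simp only [Set.mem_iUnion]
    exact ⟨fun ⟨n, h⟩ => ⟨n, n, le_rfl, h⟩, fun ⟨_, n, _, h⟩ => ⟨n, h⟩⟩
  rw [← Measure.iSup_restrict_spanningSets]
  refine iSup_le fun i => ?_
  rw [Measure.restrict_apply' (measurableSet_spanningSets μ i), hunion, Set.iUnion_inter,
    Monotone.measure_iUnion]
  · exact iSup_le fun N => measure_exists_ergodicSum_gt_inter_le hT hT1 hTinf hg hg0 hν
      (measurableSet_spanningSets μ i) (measure_spanningSets_lt_top μ i).ne N
  · exact fun N₁ N₂ h x ⟨⟨n, hn, hx⟩, hxF⟩ => ⟨⟨n, hn.trans h, hx⟩, hxF⟩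

end MaximalInequality

section OrliczFunction

variable {Φ : ℝ → ℝ}

lemma ConvexOn.map_mul_le_mul_of_map_zero (hΦ : ConvexOn ℝ (Set.Ici 0) Φ) (h0 : Φ 0 = 0)
    {a u : ℝ} (ha0 : 0 ≤ a) (ha1 : a ≤ 1) (hu : 0 ≤ u) : Φ (a * u) ≤ a * Φ u := by
  simpa [h0] using hΦ.2 (Set.mem_Ici.2 hu) Set.self_mem_Ici ha0 (sub_nonneg.2 ha1)
    (add_sub_cancel a 1)

lemma ConvexOn.monotoneOn_of_map_zero (hΦ : ConvexOn ℝ (Set.Ici 0) Φ) (h0 : Φ 0 = 0)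
    (hΦ0 : ∀ u, 0 ≤ u → 0 ≤ Φ u) : MonotoneOn Φ (Set.Ici 0) := by
  intro u hu v hv huv
  rcases (Set.mem_Ici.1 hv).eq_or_lt with rfl | hv0
  · rw [le_antisymm huv hu]
  · calc Φ u = Φ (u / v * v) := by rw [div_mul_cancel₀ u hv0.ne']
      _ ≤ u / v * Φ v :=
        hΦ.map_mul_le_mul_of_map_zero h0 (div_nonneg hu hv0.le) ((div_le_one hv0).2 huv) hv0.le
      _ ≤ Φ v := mul_le_of_le_one_left (hΦ0 v hv0.le) ((div_le_one hv0).2 huv)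

lemma MonotoneOn.measurable_comp_abs {α : Type*} [MeasurableSpace α]
    (hΦ : MonotoneOn Φ (Set.Ici 0)) {f : α → ℝ} (hf : Measurable f) :
    Measurable fun x => Φ |f x| := by
  have hmono : Monotone fun u => Φ (max u 0) := fun u v huv =>
    hΦ (le_max_right u 0) (le_max_right v 0) (max_le_max_right 0 huv)
  have hmax : ∀ x, max |f x| 0 = |f x| := fun x => max_eq_left (abs_nonneg (f x))
  simpa only [Function.comp_def, hmax] using hmono.measurable.comp hf.abs

lemma ConvexOn.le_min_add_div_mul (hΦ : ConvexOn ℝ (Set.Ici 0) Φ) (h0 : Φ 0 = 0)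
    (hΦ0 : ∀ u, 0 ≤ u → 0 ≤ Φ u) {d u : ℝ} (hd : 0 ≤ d) (hΦd : 0 < Φ d) (hu : 0 ≤ u) :
    u ≤ min u d + d / Φ d * Φ u := by
  rcases le_total u d with hud | hdu
  · rw [min_eq_left hud]
    linarith [mul_nonneg (div_nonneg hd hΦd.le) (hΦ0 u hu)]
  · have hd0 : 0 < d := hd.lt_of_ne (by rintro rfl; simp [h0] at hΦd)
    have hu0 : 0 < u := hd0.trans_le hdu
    have hscale : Φ d ≤ d / u * Φ u := by
      simpa [div_mul_cancel₀ d hu0.ne'] using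
        hΦ.map_mul_le_mul_of_map_zero h0 (div_nonneg hd hu0.le) ((div_le_one hu0).2 hdu) hu
    rw [div_mul_eq_mul_div, le_div_iff₀ hu0] at hscale
    have : u ≤ d / Φ d * Φ u := by
      rw [div_mul_eq_mul_div, le_div_iff₀ hΦd]
      linarith
    rw [min_eq_right hdu]
    linarith

end OrliczFunction

section Luxemburg

variable {α : Type*} [MeasurableSpace α] {μ : Measure α} {Φ : ℝ → ℝ} {f : α → ℝ}

lemma luxemburgNorm_nonneg : 0 ≤ luxemburgNorm μ Φ f :=
  Real.sInf_nonneg fun _ ha => ha.1.le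

lemma lintegral_ofReal_map_mul_le (hΦ : ConvexOn ℝ (Set.Ici 0) Φ) (h0 : Φ 0 = 0) {c : ℝ}
    (hc0 : 0 ≤ c) (hc1 : c ≤ 1) {u : α → ℝ} (hu : ∀ x, 0 ≤ u x) :
    ∫⁻ x, ENNReal.ofReal (Φ (c * u x)) ∂μ ≤
      ENNReal.ofReal c * ∫⁻ x, ENNReal.ofReal (Φ (u x)) ∂μ := by
  rw [← lintegral_const_mul' _ _ ENNReal.ofReal_ne_top]
  refine lintegral_mono fun x => ?_
  rw [← ENNReal.ofReal_mul hc0]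
  exact ENNReal.ofReal_le_ofReal (hΦ.map_mul_le_mul_of_map_zero h0 hc0 hc1 (hu x))

lemma exists_lintegral_le_one (hΦ : ConvexOn ℝ (Set.Ici 0) Φ) (h0 : Φ 0 = 0)
    (hf : ∃ a : ℝ, 0 < a ∧ ∫⁻ x, ENNReal.ofReal (Φ (|f x| / a)) ∂μ < ⊤) :
    ∃ a : ℝ, 0 < a ∧ ∫⁻ x, ENNReal.ofReal (Φ (|f x| / a)) ∂μ ≤ 1 := by
  obtain ⟨a, ha, hfin⟩ := hf
  set r := max 1 (∫⁻ x, ENNReal.ofReal (Φ (|f x| / a)) ∂μ).toReal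
  have hr : 0 < r := one_pos.trans_le (le_max_left _ _)
  refine ⟨a * r, by positivity, ?_⟩
  calc ∫⁻ x, ENNReal.ofReal (Φ (|f x| / (a * r))) ∂μ
      = ∫⁻ x, ENNReal.ofReal (Φ (r⁻¹ * (|f x| / a))) ∂μ := by
        simp_rw [inv_mul_eq_div, div_div]
    _ ≤ ENNReal.ofReal r⁻¹ * ∫⁻ x, ENNReal.ofReal (Φ (|f x| / a)) ∂μ :=
        lintegral_ofReal_map_mul_le hΦ h0 (inv_nonneg.2 hr.le)
          (inv_le_one_of_one_le₀ (le_max_left _ _)) fun x => by positivity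
    _ ≤ ENNReal.ofReal r⁻¹ * ENNReal.ofReal r := by
        gcongr
        rw [← ENNReal.ofReal_toReal hfin.ne]
        exact ENNReal.ofReal_le_ofReal (le_max_right _ _)
    _ = 1 := by rw [← ENNReal.ofReal_mul (inv_nonneg.2 hr.le), inv_mul_cancel₀ hr.ne',
        ENNReal.ofReal_one]

lemma lintegral_le_of_luxemburgNorm_lt (hΦ : ConvexOn ℝ (Set.Ici 0) Φ) (h0 : Φ 0 = 0)
    (hf : ∃ a : ℝ, 0 < a ∧ ∫⁻ x, ENNReal.ofReal (Φ (|f x| / a)) ∂μ < ⊤) {b : ℝ}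
    (hb : luxemburgNorm μ Φ f < b) (hb1 : b ≤ 1) :
    ∫⁻ x, ENNReal.ofReal (Φ |f x|) ∂μ ≤ ENNReal.ofReal b := by
  obtain ⟨a, ⟨ha, hmod⟩, hab⟩ :=
    (csInf_lt_iff ⟨0, fun _ ha => ha.1.le⟩ (exists_lintegral_le_one hΦ h0 hf)).1 hb
  calc ∫⁻ x, ENNReal.ofReal (Φ |f x|) ∂μ
      = ∫⁻ x, ENNReal.ofReal (Φ (a * (|f x| / a))) ∂μ := by
        simp_rw [mul_div_cancel₀ _ ha.ne']
    _ ≤ ENNReal.ofReal a * ∫⁻ x, ENNReal.ofReal (Φ (|f x| / a)) ∂μ :=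
        lintegral_ofReal_map_mul_le hΦ h0 ha.le (hab.le.trans hb1) fun x => by positivity
    _ ≤ ENNReal.ofReal a * 1 := by gcongr
    _ ≤ ENNReal.ofReal b := by rw [mul_one]; exact ENNReal.ofReal_le_ofReal hab.le

lemma integrable_and_integral_le_of_luxemburgNorm_lt (hΦ : ConvexOn ℝ (Set.Ici 0) Φ)
    (h0 : Φ 0 = 0) (hΦ0 : ∀ u, 0 ≤ u → 0 ≤ Φ u) (hfm : Measurable f)
    (hf : ∃ a : ℝ, 0 < a ∧ ∫⁻ x, ENNReal.ofReal (Φ (|f x| / a)) ∂μ < ⊤) {b : ℝ}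
    (hb : luxemburgNorm μ Φ f < b) (hb1 : b ≤ 1) :
    Integrable (fun x => Φ |f x|) μ ∧ ∫ x, Φ |f x| ∂μ ≤ b := by
  have hnonneg : 0 ≤ᵐ[μ] fun x => Φ |f x| := ae_of_all _ fun x => hΦ0 _ (abs_nonneg _)
  have hmod := lintegral_le_of_luxemburgNorm_lt hΦ h0 hf hb hb1
  have hint : Integrable (fun x => Φ |f x|) μ :=
    ⟨((hΦ.monotoneOn_of_map_zero h0 hΦ0).measurable_comp_abs hfm).aestronglyMeasurable,
      (hasFiniteIntegral_iff_ofReal hnonneg).2 (hmod.trans_lt ENNReal.ofReal_lt_top)⟩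
  refine ⟨hint, (ENNReal.ofReal_le_ofReal_iff (luxemburgNorm_nonneg.trans hb.le)).1 ?_⟩
  rwa [ofReal_integral_eq_lintegral_ofReal hint hnonneg]

end Luxemburg

section ErgodicAverages

variable {α : Type*} [MeasurableSpace α] {μ : Measure α} {T : Module.End ℝ (α → ℝ)}
  {Φ : ℝ → ℝ}

theorem exists_measurableSet_ergodicSum_abs_le [SigmaFinite μ] (hΦ : ConvexOn ℝ (Set.Ici 0) Φ)
    (h0 : Φ 0 = 0) (hΦ0 : ∀ u, 0 ≤ u → 0 ≤ Φ u) (hT : Monotone T) (hT1 : IsL1Contraction μ T)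
    (hTinf : IsLInftyContraction μ T) {d : ℝ} (hd : 0 ≤ d) (hΦd : 0 < Φ d) {f : α → ℝ}
    (hg : Integrable (fun x => Φ |f x|) μ) :
    ∃ E : Set α, MeasurableSet E ∧ μ Eᶜ ≤ ENNReal.ofReal ((∫ x, Φ |f x| ∂μ) / Φ d) ∧
      ∀ n : ℕ, ∀ x ∈ E, ergodicSum T n (fun y => |f y|) x ≤ n * (2 * d) := by
  set B := {x | ∃ n : ℕ, Φ d * n < ergodicSum T n (fun y => Φ |f y|) x}
  set Z := {x | ¬∀ n : ℕ, ergodicSum T n (fun y => min |f y| d) x ≤ n * d}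
  have hB : μ B ≤ ENNReal.ofReal ((∫ x, Φ |f x| ∂μ) / Φ d) :=
    measure_exists_ergodicSum_gt_le hT hT1 hTinf hg (fun x => hΦ0 _ (abs_nonneg _)) hΦd
  have hZ : μ Z = 0 := ae_iff.1 <| hTinf.ae_ergodicSum_le fun y => by
    rw [abs_of_nonneg (le_min (abs_nonneg _) hd)]
    exact min_le_right _ _
  have hsplit : ∀ n, ergodicSum T n (fun y => |f y|) ≤
      ergodicSum T n (fun y => min |f y| d) + (d / Φ d) • ergodicSum T n (fun y => Φ |f y|) := by
    intro n
    rw [← map_smul, ← map_add]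
    exact monotone_ergodicSum hT n fun y => hΦ.le_min_add_div_mul h0 hΦ0 hd hΦd (abs_nonneg _)
  refine ⟨(toMeasurable μ (B ∪ Z))ᶜ, (measurableSet_toMeasurable _ _).compl, ?_, ?_⟩
  · rw [compl_compl, measure_toMeasurable]
    exact (measure_union_le B Z).trans (by rwa [hZ, add_zero])
  · intro n x hx
    have hxB : x ∉ B := fun h => hx (subset_toMeasurable _ _ (Or.inl h))
    have hxZ : x ∉ Z := fun h => hx (subset_toMeasurable _ _ (Or.inr h))
    simp only [B, Z, Set.mem_ofPred_eq, not_exists, not_lt, not_not] at hxB hxZ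
    calc ergodicSum T n (fun y => |f y|) x
        ≤ ergodicSum T n (fun y => min |f y| d) x +
            d / Φ d * ergodicSum T n (fun y => Φ |f y|) x := hsplit n x
      _ ≤ n * d + d / Φ d * (Φ d * n) := by gcongr; exacts [hxZ n, hxB n]
      _ = n * (2 * d) := by field_simp; ring

end ErgodicAverages

theorem averages_uem_on_orlicz_general {α : Type*} [MeasurableSpace α] (μ : Measure α) [SigmaFinite μ]
    (Φ : ℝ → ℝ)
    (hconv : ConvexOn ℝ (Set.Ici 0) Φ)
    (h0 : Φ 0 = 0)
    (hpos : ∀ u : ℝ, 0 < u → 0 < Φ u)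
    (T : (α → ℝ) → (α → ℝ))
    (hadd : ∀ f g : α → ℝ, T (f + g) = T f + T g)
    (hsmul : ∀ (c : ℝ) (f : α → ℝ), T (c • f) = c • T f)
    (hposT : ∀ f : α → ℝ, (∀ x, 0 ≤ f x) → ∀ x, 0 ≤ T f x)
    (hcontr1 : ∀ f : α → ℝ, Integrable f μ →
      Integrable (T f) μ ∧ ∫ x, |T f x| ∂μ ≤ ∫ x, |f x| ∂μ)
    (hcontrInf : ∀ f : α → ℝ, eLpNorm (T f) ⊤ μ ≤ eLpNorm f ⊤ μ) :
    ∀ ε > (0:ℝ), ∀ δ > (0:ℝ), ∃ γ > (0:ℝ), ∀ f : α → ℝ, Measurable f →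
      (∃ a : ℝ, 0 < a ∧ ∫⁻ x, ENNReal.ofReal (Φ (|f x| / a)) ∂μ < ⊤) →
      luxemburgNorm μ Φ f ≤ γ →
      ∃ E : Set α, MeasurableSet E ∧ μ Eᶜ ≤ ENNReal.ofReal ε ∧
        ∀ n : ℕ, 0 < n → ∀ x ∈ E,
          |(n : ℝ)⁻¹ * ∑ k ∈ range n, (T^[k] (fun y => |f y|)) x| ≤ δ := by
  intro ε hε δ hδ
  let L : Module.End ℝ (α → ℝ) := ⟨⟨T, hadd⟩, hsmul⟩
  have hL : Monotone L := (monotone_iff_map_nonneg L).2 fun f hf => hposT f hf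
  have hΦ0 : ∀ u, 0 ≤ u → 0 ≤ Φ u := fun u hu => hu.eq_or_lt.elim (fun h => h ▸ h0.ge)
    fun h => (hpos u h).le
  have hΦd : 0 < Φ (δ / 2) := hpos _ (by positivity)
  set γ := min (1 / 2) (ε * Φ (δ / 2) / 2)
  have hγ : 2 * γ ≤ 1 ∧ 2 * γ ≤ ε * Φ (δ / 2) :=
    ⟨by linarith [min_le_left (1 / 2) (ε * Φ (δ / 2) / 2)],
      by linarith [min_le_right (1 / 2) (ε * Φ (δ / 2) / 2)]⟩
  refine ⟨γ, by positivity, fun f hf hfin hlux => ?_⟩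
  obtain ⟨hg, hgint⟩ := integrable_and_integral_le_of_luxemburgNorm_lt (μ := μ) hconv h0 hΦ0 hf
    hfin (hlux.trans_lt (by linarith [show 0 < γ by positivity])) hγ.1
  obtain ⟨E, hE, hEμ, hEbound⟩ := exists_measurableSet_ergodicSum_abs_le hconv h0 hΦ0 hL
    hcontr1 hcontrInf (by positivity) hΦd hg
  refine ⟨E, hE, hEμ.trans (ENNReal.ofReal_le_ofReal ((div_le_iff₀ hΦd).2 (by linarith))),
    fun n _ x hx => ?_⟩
  have hsum : ∑ k ∈ range n, T^[k] (fun y => |f y|) x = ergodicSum L n (fun y => |f y|) x := by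
    rw [ergodicSum_apply, Finset.sum_apply]
    rfl
  have hnonneg : 0 ≤ ergodicSum L n (fun y => |f y|) x :=
    (monotone_iff_map_nonneg _).1 (monotone_ergodicSum hL n) _ (fun y => abs_nonneg (f y)) x
  rw [hsum, abs_of_nonneg (mul_nonneg (by positivity) hnonneg), inv_mul_le_iff₀ (by positivity)]
  linarith [hEbound n x hx]

theorem averages_uem_on_orlicz {α : Type*} [MeasurableSpace α] (μ : Measure α) [SigmaFinite μ]
    (Φ : ℝ → ℝ)
    (hconv : ConvexOn ℝ (Set.Ici 0) Φ)
    (h0 : Φ 0 = 0)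
    (hcont : ContinuousWithinAt Φ (Set.Ici 0) 0)
    (hpos : ∀ u : ℝ, 0 < u → 0 < Φ u)
    (T : (α → ℝ) → (α → ℝ))
    (hadd : ∀ f g : α → ℝ, T (f + g) = T f + T g)
    (hsmul : ∀ (c : ℝ) (f : α → ℝ), T (c • f) = c • T f)
    (hposT : ∀ f : α → ℝ, (∀ x, 0 ≤ f x) → ∀ x, 0 ≤ T f x)
    (hcontr1 : ∀ f : α → ℝ, Integrable f μ →
      Integrable (T f) μ ∧ ∫ x, |T f x| ∂μ ≤ ∫ x, |f x| ∂μ)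
    (hcontrInf : ∀ f : α → ℝ, eLpNorm (T f) ⊤ μ ≤ eLpNorm f ⊤ μ) :
    ∀ ε > (0:ℝ), ∀ δ > (0:ℝ), ∃ γ > (0:ℝ), ∀ f : α → ℝ, Measurable f →
      (∃ a : ℝ, 0 < a ∧ ∫⁻ x, ENNReal.ofReal (Φ (|f x| / a)) ∂μ < ⊤) →
      luxemburgNorm μ Φ f ≤ γ →
      ∃ E : Set α, MeasurableSet E ∧ μ Eᶜ ≤ ENNReal.ofReal ε ∧
        ∀ n : ℕ, 0 < n → ∀ x ∈ E,
          |(n : ℝ)⁻¹ * ∑ k ∈ range n, (T^[k] (fun y => |f y|)) x| ≤ δ :=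
  averages_uem_on_orlicz_general μ Φ hconv h0 hpos T hadd hsmul hposT hcontr1 hcontrInf
end
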